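/- Let (Gᵢ, pᵢ) be an inverse sequence of groups satisfying the Mittag-Leffler condition. Then the natural homomorphism lim Gᵢ → lim Gᵢᵃᵇ induced by the abelianization quotients Gᵢ → Gᵢᵃᵇ is surjective, and its kernel equals the topological closure of the commutator subgroup of lim Gᵢ, where lim Gᵢ carries the inverse limit topology induced from the discrete topologies on the Gᵢ. -/

import Mathlib

/-!
By the Mittag-Leffler condition the stable images `Hᵢ ⊆ Gᵢ` of the bonding maps are mapped onto
each other, so every element of `Hₙ` lies on a thread.

Surjectivity: given a thread `(aᵢ)` of abelianizations, the images in `Gᵢ` of the fibres over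
`a_k` (for `k` beyond the stable index of `i`) are cosets of the single subgroup `⁅Hᵢ, Hᵢ⁆`, and
they decrease with `k`; hence they are all equal, they again map onto each other, and a thread
through them lifts `(aᵢ)`.

Kernel: if every coordinate of a thread `g` is a commutator, then `gₙ ∈ ⁅Hₙ, Hₙ⁆`, which is the
image of the commutator subgroup of the limit because `Hₙ` is the image of the limit. So `g`
agrees on every initial segment with an element of that commutator subgroup, which is what being
in its closure means for the inverse limit topology.
-/

/-- An inverse sequence of groups `⋯ → G₂ → G₁ → G₀`, presented by its compatible
composite bonding homomorphisms `bond h : G j →* G i` for `i ≤ j`; the one-step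
bonding maps `pᵢ` are `bond (Nat.le_succ i) : G (i+1) →* G i`. -/
structure GroupInvSeq (G : ℕ → Type) [∀ i, Group (G i)] : Type where
  bond : ∀ ⦃i j : ℕ⦄, i ≤ j → (G j →* G i)
  bond_refl : ∀ i, bond (le_refl i) = MonoidHom.id (G i)
  bond_comp : ∀ ⦃i j k : ℕ⦄ (hij : i ≤ j) (hjk : j ≤ k),
    (bond hij).comp (bond hjk) = bond (hij.trans hjk)

/-- The Mittag-Leffler condition for an inverse sequence of groups. -/
def GroupInvSeq.MittagLeffler {G : ℕ → Type} [∀ i, Group (G i)]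
    (S : GroupInvSeq G) : Prop :=
  ∀ i, ∃ j, ∃ hij : i < j, ∀ k, ∀ hjk : j < k,
    Set.range (S.bond (hij.le.trans hjk.le)) = Set.range (S.bond hij.le)

/-- The inverse limit of a sequence of groups and bonding homomorphisms, as a
subgroup of the product: the group of threads. -/
def limSub {X : ℕ → Type} [∀ i, Group (X i)] (d : ∀ i, X (i + 1) →* X i) :
    Subgroup (∀ i, X i) where
  carrier := {g | ∀ i, d i (g (i + 1)) = g i}
  one_mem' := by intro i; simp
  mul_mem' := by
    intro a b ha hb i
    simp only [Pi.mul_apply, map_mul]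
    rw [ha i, hb i]
  inv_mem' := by
    intro a ha i
    simp only [Pi.inv_apply, map_inv]
    rw [ha i]

theorem mem_limSub {X : ℕ → Type} [∀ i, Group (X i)] {d : ∀ i, X (i + 1) →* X i}
    {g : ∀ i, X i} : g ∈ limSub d ↔ ∀ i, d i (g (i + 1)) = g i :=
  Iff.rfl

/-- The natural map `lim Gᵢ → lim Gᵢᵃᵇ` induced by the abelianization quotients
`Gᵢ → Gᵢᵃᵇ`. -/
def abelianizationLimMap {G : ℕ → Type} [∀ i, Group (G i)] (S : GroupInvSeq G) :
    ↥(limSub fun i => S.bond (Nat.le_succ i)) →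
      ↥(limSub (X := fun i => Abelianization (G i))
        fun i => Abelianization.map (S.bond (Nat.le_succ i))) :=
  fun g => ⟨fun i => Abelianization.of (g.1 i), fun i => by
    rw [Abelianization.map_of, (mem_limSub.mp g.2) i]⟩

theorem Abelianization.of_eq_one_iff {H : Type*} [Group H] {x : H} :
    Abelianization.of x = 1 ↔ x ∈ commutator H := by
  rw [← Abelianization.ker_of, MonoidHom.mem_ker]

theorem MonoidHom.apply_mem_commutator {H K : Type*} [Group H] [Group K] (f : H →* K) {x : H}
    (hx : x ∈ commutator H) : f x ∈ commutator K :=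
  Subgroup.commutator_mono le_top le_top <|
    map_commutator_eq (f := f) ▸ Subgroup.mem_map_of_mem f hx

theorem exists_seq_of_forall_lift {α : ℕ → Type*} (f : ∀ i, α (i + 1) → α i)
    (P : ∀ i, α i → Prop) {x : α 0} (hx : P 0 x)
    (lift : ∀ i y, P i y → ∃ z, P (i + 1) z ∧ f i z = y) :
    ∃ g : ∀ i, α i, (∀ i, P i (g i)) ∧ ∀ i, f i (g (i + 1)) = g i := by
  choose up hup using lift
  let t : ∀ i, {y // P i y} := fun i =>
    Nat.rec ⟨x, hx⟩ (fun i y => ⟨up i y.1 y.2, (hup i y.1 y.2).1⟩) i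
  exact ⟨fun i => (t i).1, fun i => (t i).2, fun i => (hup i (t i).1 (t i).2).2⟩

theorem PiNat.mem_closure_iff_forall_cylinder_inter_nonempty {E : ℕ → Type*}
    [∀ n, TopologicalSpace (E n)] [∀ n, DiscreteTopology (E n)] {s : Set (∀ n, E n)}
    {x : ∀ n, E n} : x ∈ closure s ↔ ∀ n, (PiNat.cylinder x n ∩ s).Nonempty := by
  rw [(PiNat.isTopologicalBasis_cylinders E).mem_closure_iff]
  constructor
  · exact fun h n => h _ ⟨x, n, rfl⟩ (PiNat.self_mem_cylinder x n)
  · rintro h _ ⟨y, n, rfl⟩ hx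
    rw [← PiNat.mem_cylinder_iff_eq.mp hx]
    exact h n

namespace GroupInvSeq

variable {G : ℕ → Type} [∀ i, Group (G i)] (S : GroupInvSeq G)

theorem bond_self (i : ℕ) (x : G i) : S.bond (le_refl i) x = x := by
  rw [S.bond_refl]; rfl

theorem bond_bond {i j k : ℕ} (hij : i ≤ j) (hjk : j ≤ k) (x : G k) :
    S.bond hij (S.bond hjk x) = S.bond (hij.trans hjk) x := by
  rw [← S.bond_comp hij hjk]; rfl

abbrev lim : Subgroup (∀ i, G i) := limSub fun i => S.bond (Nat.le_succ i)

theorem bond_apply_of_mem_lim {g : ∀ i, G i} (hg : g ∈ S.lim) {i j : ℕ} (hij : i ≤ j) :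
    S.bond hij (g j) = g i := by
  induction j, hij using Nat.le_induction with
  | base => exact S.bond_self i (g i)
  | succ j hij ih => rw [← S.bond_bond hij (Nat.le_succ j), hg j, ih]

def abelianization : GroupInvSeq fun i => Abelianization (G i) where
  bond _ _ h := Abelianization.map (S.bond h)
  bond_refl i := by rw [S.bond_refl]; exact Abelianization.map_id
  bond_comp _ _ _ hij hjk := by rw [Abelianization.map_comp, S.bond_comp]

theorem mapsTo_bond_of_image_bond_succ {E : ∀ i, Set (G i)}
    (hE : ∀ i, S.bond (Nat.le_succ i) '' E (i + 1) = E i) {i j : ℕ} (hij : i ≤ j) :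
    Set.MapsTo (S.bond hij) (E j) (E i) := by
  induction j, hij using Nat.le_induction with
  | base => intro x hx; rwa [S.bond_self]
  | succ j hij ih =>
    intro x hx
    rw [← S.bond_bond hij (Nat.le_succ j)]
    exact ih (hE j ▸ Set.mem_image_of_mem _ hx)

theorem exists_mem_lim_of_image_bond_succ {E : ∀ i, Set (G i)}
    (hE : ∀ i, S.bond (Nat.le_succ i) '' E (i + 1) = E i) {n : ℕ} {x : G n} (hx : x ∈ E n) :
    ∃ g ∈ S.lim, g n = x ∧ ∀ i, g i ∈ E i := by
  -- Below `n` the thread is forced to consist of the images of `x`.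
  let P : ∀ i, G i → Prop := fun i y => y ∈ E i ∧ ∀ h : i ≤ n, y = S.bond h x
  have lift : ∀ i y, P i y → ∃ z, P (i + 1) z ∧ S.bond (Nat.le_succ i) z = y := by
    rintro i y ⟨hy, hyx⟩
    by_cases hin : i + 1 ≤ n
    · refine ⟨S.bond hin x, ⟨S.mapsTo_bond_of_image_bond_succ hE hin hx, fun _ => rfl⟩, ?_⟩
      rw [S.bond_bond, hyx]
    · rw [← hE i] at hy
      obtain ⟨z, hz, rfl⟩ := hy
      exact ⟨z, ⟨hz, fun h => absurd h hin⟩, rfl⟩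
  obtain ⟨g, hgP, hg⟩ := exists_seq_of_forall_lift _ P
    ⟨S.mapsTo_bond_of_image_bond_succ hE (Nat.zero_le n) hx, fun _ => rfl⟩ lift
  exact ⟨g, hg, by rw [(hgP n).2 le_rfl, S.bond_self], fun i => (hgP i).1⟩

theorem image_bond_succ_of_image_stable (F : ∀ i, Set (G i)) {N : ℕ → ℕ}
    (le_N : ∀ i, i ≤ N i)
    (stable : ∀ i k (hk : N i ≤ k),
      S.bond ((le_N i).trans hk) '' F k = S.bond (le_N i) '' F (N i)) (i : ℕ) :
    S.bond (Nat.le_succ i) '' (S.bond (le_N (i + 1)) '' F (N (i + 1))) =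
      S.bond (le_N i) '' F (N i) := by
  rw [← stable (i + 1) _ (le_max_right (N i) _), Set.image_image,
    ← stable i _ (le_max_left _ (N (i + 1)))]
  simp only [S.bond_bond]

theorem mapsTo_bond_fiber {a : ∀ i, Abelianization (G i)} (ha : a ∈ S.abelianization.lim)
    {i k : ℕ} (hik : i ≤ k) :
    Set.MapsTo (S.bond hik) (Abelianization.of ⁻¹' {a k}) (Abelianization.of ⁻¹' {a i}) := by
  intro x hx
  rw [Set.mem_preimage, Set.mem_singleton_iff] at hx ⊢
  rw [← Abelianization.map_of, hx]
  exact S.abelianization.bond_apply_of_mem_lim ha hik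

theorem abelianizationLimMap_eq_one_iff (g : S.lim) :
    abelianizationLimMap S g = 1 ↔ ∀ i, g.1 i ∈ commutator (G i) := by
  simp only [Subtype.ext_iff, funext_iff, ← Abelianization.of_eq_one_iff]
  rfl

namespace MittagLeffler

variable {S}

/-- An index from which on the ranges of the bonding maps into `G i` are stable. -/
noncomputable def index (hML : S.MittagLeffler) (i : ℕ) : ℕ := (hML i).choose

theorem le_index (hML : S.MittagLeffler) (i : ℕ) : i ≤ hML.index i :=
  (hML i).choose_spec.choose.le

noncomputable def stableRange (hML : S.MittagLeffler) (i : ℕ) : Subgroup (G i) :=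
  (S.bond (hML.le_index i)).range

theorem range_bond_eq_stableRange (hML : S.MittagLeffler) {i k : ℕ} (hk : hML.index i ≤ k)
    (hik : i ≤ k) :
    (S.bond hik).range = hML.stableRange i := by
  rcases hk.eq_or_lt with rfl | hlt
  · rfl
  · exact SetLike.coe_injective ((hML i).choose_spec.choose_spec k hlt)

theorem image_bond_succ_stableRange (hML : S.MittagLeffler) (i : ℕ) :
    S.bond (Nat.le_succ i) '' hML.stableRange (i + 1) = hML.stableRange i := by
  have stable (i k : ℕ) (hk : hML.index i ≤ k) :
      S.bond ((hML.le_index i).trans hk) '' Set.univ = S.bond (hML.le_index i) '' Set.univ := by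
    simp only [Set.image_univ, ← MonoidHom.coe_range, hML.range_bond_eq_stableRange hk]
    rfl
  simpa only [Set.image_univ, ← MonoidHom.coe_range, stableRange]
    using S.image_bond_succ_of_image_stable (fun _ => Set.univ) hML.le_index stable i

theorem exists_mem_lim_apply_eq (hML : S.MittagLeffler) {n : ℕ} {x : G n}
    (hx : x ∈ hML.stableRange n) :
    ∃ g ∈ S.lim, g n = x :=
  let ⟨g, hg, hgx, _⟩ := S.exists_mem_lim_of_image_bond_succ
    (E := fun i => hML.stableRange i) hML.image_bond_succ_stableRange hx
  ⟨g, hg, hgx⟩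

theorem map_commutator_bond (hML : S.MittagLeffler) {i k : ℕ} (hk : hML.index i ≤ k)
    (hik : i ≤ k) :
    (commutator (G k)).map (S.bond hik) = ⁅hML.stableRange i, hML.stableRange i⁆ := by
  rw [map_commutator_eq, hML.range_bond_eq_stableRange hk]

theorem image_bond_fiber_eq (hML : S.MittagLeffler) {a : ∀ i, Abelianization (G i)}
    (ha : a ∈ S.abelianization.lim) {i k : ℕ} (hk : hML.index i ≤ k) :
    S.bond ((hML.le_index i).trans hk) '' (Abelianization.of ⁻¹' {a k}) =
      S.bond (hML.le_index i) '' (Abelianization.of ⁻¹' {a (hML.index i)}) := by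
  apply Set.Subset.antisymm
  · rintro _ ⟨x, hx, rfl⟩
    exact ⟨S.bond hk x, S.mapsTo_bond_fiber ha hk hx, S.bond_bond _ _ x⟩
  rintro _ ⟨y, hy, rfl⟩
  obtain ⟨x, hx⟩ : ∃ x, Abelianization.of x = a k := QuotientGroup.mk'_surjective _ (a k)
  -- Both `G k` and `G (index i)` map their commutator subgroups onto `⁅Hᵢ, Hᵢ⁆`, so the
  -- discrepancy between `y` and the image of `x` can be absorbed into `x`.
  have hxy : y⁻¹ * S.bond hk x ∈ commutator (G (hML.index i)) := by
    rw [← Abelianization.of_eq_one_iff, map_mul, map_inv, hy,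
      S.mapsTo_bond_fiber ha hk (Set.mem_singleton_iff.mpr hx), inv_mul_cancel]
  obtain ⟨d, hd, hdxy⟩ : S.bond (hML.le_index i) (y⁻¹ * S.bond hk x) ∈
      (commutator (G k)).map (S.bond ((hML.le_index i).trans hk)) := by
    rw [hML.map_commutator_bond hk, ← hML.map_commutator_bond le_rfl]
    exact Subgroup.mem_map_of_mem _ hxy
  refine ⟨x * d⁻¹, ?_, ?_⟩
  · rw [Set.mem_preimage, map_mul, map_inv, Abelianization.of_eq_one_iff.mpr hd, inv_one,
      mul_one]
    exact hx
  · rw [map_mul, map_inv, hdxy, map_mul, map_inv, S.bond_bond, mul_inv_rev, inv_inv,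
      mul_inv_cancel_left]

theorem surjective_abelianizationLimMap (hML : S.MittagLeffler) :
    Function.Surjective (abelianizationLimMap S) := by
  rintro ⟨a, ha⟩
  let E i := S.bond (hML.le_index i) '' (Abelianization.of ⁻¹' {a (hML.index i)})
  have hE : ∀ i, S.bond (Nat.le_succ i) '' E (i + 1) = E i :=
    S.image_bond_succ_of_image_stable _ hML.le_index fun _ _ hk =>
      hML.image_bond_fiber_eq ha hk
  obtain ⟨x, hx⟩ : ∃ x, Abelianization.of x = a (hML.index 0) := QuotientGroup.mk'_surjective _ _
  obtain ⟨g, hg, -, hgE⟩ := S.exists_mem_lim_of_image_bond_succ hE ⟨x, hx, rfl⟩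
  exact ⟨⟨g, hg⟩, Subtype.ext <| funext fun i =>
    (S.mapsTo_bond_fiber ha (hML.le_index i)).image_subset (hgE i)⟩

theorem exists_mem_commutator_apply_eq_of_le (hML : S.MittagLeffler) {g : ∀ i, G i}
    (hg : g ∈ S.lim)
    (hK : ∀ i, g i ∈ commutator (G i)) (n : ℕ) :
    ∃ h ∈ commutator S.lim, ∀ i ≤ n, h.1 i = g i := by
  let π : S.lim →* G n := (Pi.evalMonoidHom G n).comp S.lim.subtype
  have hgn : g n ∈ ⁅hML.stableRange n, hML.stableRange n⁆ := by
    rw [← hML.map_commutator_bond le_rfl (hML.le_index n)]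
    exact ⟨g _, hK _, S.bond_apply_of_mem_lim hg _⟩
  have hrange : hML.stableRange n ≤ (⊤ : Subgroup S.lim).map π := by
    intro x hx
    obtain ⟨g', hg', rfl⟩ := hML.exists_mem_lim_apply_eq hx
    exact ⟨⟨g', hg'⟩, trivial, rfl⟩
  obtain ⟨h, hC, hhn⟩ := Subgroup.commutator_le_map_commutator hrange hrange hgn
  refine ⟨h, hC, fun i hi => ?_⟩
  rw [← S.bond_apply_of_mem_lim h.2 hi, ← S.bond_apply_of_mem_lim hg hi]
  exact congrArg _ hhn

theorem abelianizationLimMap_preimage_one (hML : S.MittagLeffler)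
    [∀ i, TopologicalSpace (G i)] [∀ i, DiscreteTopology (G i)] :
    abelianizationLimMap S ⁻¹' {1} = closure (commutator S.lim : Set S.lim) := by
  ext g
  rw [Set.mem_preimage, Set.mem_singleton_iff, abelianizationLimMap_eq_one_iff, closure_subtype,
    PiNat.mem_closure_iff_forall_cylinder_inter_nonempty]
  constructor
  · intro hK n
    obtain ⟨h, hC, hh⟩ := hML.exists_mem_commutator_apply_eq_of_le g.2 hK n
    exact ⟨h, PiNat.mem_cylinder_iff.mpr fun i hi => hh i hi.le, h, hC, rfl⟩
  · intro hcl i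
    obtain ⟨_, hcyl, h, hC, rfl⟩ := hcl (i + 1)
    rw [← PiNat.mem_cylinder_iff.mp hcyl i (Nat.lt_succ_self i)]
    exact MonoidHom.apply_mem_commutator ((Pi.evalMonoidHom G i).comp S.lim.subtype) hC

end MittagLeffler

end GroupInvSeq

/-- For a Mittag-Leffler inverse sequence of groups, the natural homomorphism
`lim Gᵢ → lim Gᵢᵃᵇ` is surjective, and its kernel is the topological closure of the
commutator subgroup of `lim Gᵢ` (in the inverse limit topology coming from the
discrete topologies on the `Gᵢ`). -/
theorem lim_abelianization_surjective_and_kernel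
    {G : ℕ → Type} [∀ i, Group (G i)]
    [∀ i, TopologicalSpace (G i)] [∀ i, DiscreteTopology (G i)]
    (S : GroupInvSeq G) (hML : S.MittagLeffler) :
    Function.Surjective (abelianizationLimMap S) ∧
    (abelianizationLimMap S) ⁻¹' {1} =
      closure ((commutator ↥(limSub fun i => S.bond (Nat.le_succ i))
        : Subgroup _) : Set _) :=
  ⟨hML.surjective_abelianizationLimMap, hML.abelianizationLimMap_preimage_one⟩
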